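/- Let ψ be a normalized 4-qubit pure state such that the single-qubit reduced density matrix ρ_{{1}} has characteristic polynomial (X − p)(X − (1 − p)) with p ≠ 1/2, and such that ρ_{{1,2}} = ρ_{{1}} ⊗ (1/2)·I₂. Then the two-qubit reduced density matrix ρ_{{3,4}} has characteristic polynomial (X − p/2)² (X − (1 − p)/2)², i.e. its eigenvalues are p/2, p/2, (1−p)/2, (1−p)/2. -/

import Mathlib

open Complex Matrix Kronecker Polynomial

/-- Single-qubit reduced density matrix of an `n`-qubit state at position `m`. -/
noncomputable def reduced1 {n : ℕ} (ψ : (Fin n → Fin 2) → ℂ) (m : Fin n) :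
    Matrix (Fin 2) (Fin 2) ℂ :=
  Matrix.of fun a b => ∑ c : Fin n → Fin 2,
    if c m = 0 then
      ψ (Function.update c m a) * starRingEnd ℂ (ψ (Function.update c m b))
    else 0

/-- Two-qubit reduced density matrix of an `n`-qubit state at distinct positions `m₁, m₂`. -/
noncomputable def reduced2 {n : ℕ} (ψ : (Fin n → Fin 2) → ℂ) (m₁ m₂ : Fin n) :
    Matrix (Fin 2 × Fin 2) (Fin 2 × Fin 2) ℂ :=
  Matrix.of fun a b => ∑ c : Fin n → Fin 2,
    if c m₁ = 0 ∧ c m₂ = 0 then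
      ψ (Function.update (Function.update c m₁ a.1) m₂ a.2) *
        starRingEnd ℂ (ψ (Function.update (Function.update c m₁ b.1) m₂ b.2))
    else 0

section Aux

variable {n o : Type*} [DecidableEq n] [Fintype n] [DecidableEq o] [Fintype o]

lemma myCharpoly_transpose {R : Type*} [CommRing R] (M : Matrix n n R) :
    Mᵀ.charpoly = M.charpoly := by
  rw [Matrix.charpoly, Matrix.charpoly, ← Matrix.det_transpose (charmatrix M)]
  congr 1
  ext i j
  by_cases h : i = j <;>
    simp [charmatrix_apply, Matrix.transpose_apply, Matrix.diagonal_apply, h, eq_comm]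

lemma myCharpoly_blockDiagonal {R : Type*} [CommRing R] (f : o → Matrix n n R) :
    (Matrix.blockDiagonal f).charpoly = ∏ k, (f k).charpoly := by
  simp only [Matrix.charpoly]
  rw [← Matrix.det_blockDiagonal]
  congr 1
  ext ⟨i, k⟩ ⟨j, k'⟩
  by_cases h : k = k'
  · subst h
    by_cases hij : i = j <;>
      simp [charmatrix_apply, Matrix.blockDiagonal_apply, Matrix.diagonal_apply, hij,
        Prod.ext_iff]
  · simp [charmatrix_apply, Matrix.blockDiagonal_apply, Matrix.diagonal_apply, h,
      Prod.ext_iff]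

set_option synthInstance.maxHeartbeats 1000000 in
lemma det_smul_one_sub_mul_comm {K : Type*} [Field K] (t : K) (ht : t ≠ 0)
    (A B : Matrix n n K) :
    (t • (1 : Matrix n n K) - A * B).det = (t • (1 : Matrix n n K) - B * A).det := by
  have h1 : t • (1 : Matrix n n K) - A * B = t • (1 + ((-t⁻¹) • A) * B) := by
    rw [smul_add, Matrix.smul_mul, smul_smul, mul_neg, mul_inv_cancel₀ ht]
    simp [sub_eq_add_neg]
  have h2 : t • (1 : Matrix n n K) - B * A = t • (1 + B * ((-t⁻¹) • A)) := by
    rw [smul_add, Matrix.mul_smul, smul_smul, mul_neg, mul_inv_cancel₀ ht]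
    simp [sub_eq_add_neg]
  rw [h1, h2, Matrix.det_smul, Matrix.det_smul, Matrix.det_one_add_mul_comm]

set_option synthInstance.maxHeartbeats 1000000 in
set_option maxHeartbeats 1000000 in
lemma myCharpoly_mul_comm (A B : Matrix n n ℂ) :
    (A * B).charpoly = (B * A).charpoly := by
  set f := algebraMap ℂ[X] (RatFunc ℂ) with hfdef
  have hf : Function.Injective f := RatFunc.algebraMap_injective ℂ
  apply hf
  have hcm : ∀ M : Matrix n n ℂ, (charmatrix M).map f
      = (f X) • (1 : Matrix n n (RatFunc ℂ)) - M.map (f.comp Polynomial.C) := by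
    intro M
    ext i j
    by_cases h : i = j <;>
      simp [charmatrix_apply, Matrix.diagonal_apply, Matrix.one_apply, h, sub_eq_add_neg]
  have hfx : f X ≠ 0 := by
    simpa using (map_ne_zero_iff f hf).mpr (Polynomial.X_ne_zero)
  rw [Matrix.charpoly, Matrix.charpoly, RingHom.map_det, RingHom.map_det,
    RingHom.mapMatrix_apply, RingHom.mapMatrix_apply, hcm, hcm,
    Matrix.map_mul, Matrix.map_mul]
  exact det_smul_one_sub_mul_comm (f X) hfx _ _

lemma myCharpoly_fin_two {R : Type*} [CommRing R] (M : Matrix (Fin 2) (Fin 2) R) :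
    M.charpoly = X ^ 2 - Polynomial.C M.trace * X + Polynomial.C M.det := by
  rw [Matrix.charpoly, Matrix.det_fin_two, Matrix.trace_fin_two, Matrix.det_fin_two]
  rw [charmatrix_apply_eq, charmatrix_apply_eq, charmatrix_apply_ne _ _ _ (by decide),
    charmatrix_apply_ne _ _ _ (by decide)]
  simp only [map_add, map_sub, _root_.map_mul]
  ring

end Aux

/-- The matrix of a 4-qubit state, rows = qubits 0,1 and cols = qubits 2,3. -/
noncomputable def psiMat (ψ : (Fin 4 → Fin 2) → ℂ) :
    Matrix (Fin 2 × Fin 2) (Fin 2 × Fin 2) ℂ :=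
  Matrix.of fun a b => ψ ![a.1, a.2, b.1, b.2]

def quadEquiv : ((Fin 2 × Fin 2) × (Fin 2 × Fin 2)) ≃ (Fin 4 → Fin 2) where
  toFun x := ![x.1.1, x.1.2, x.2.1, x.2.2]
  invFun c := ((c 0, c 1), (c 2, c 3))
  left_inv := by rintro ⟨⟨a, b⟩, ⟨c, d⟩⟩; rfl
  right_inv := by intro c; funext i; fin_cases i <;> rfl

lemma upd01 (x y a b : Fin 2) :
    Function.update (Function.update ![(0 : Fin 2), 0, x, y] 0 a) 1 b = ![a, b, x, y] := by
  funext i; fin_cases i <;> simp [Function.update]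

lemma upd23 (x y a b : Fin 2) :
    Function.update (Function.update ![x, y, (0 : Fin 2), 0] 2 a) 3 b = ![x, y, a, b] := by
  funext i; fin_cases i <;> simp [Function.update]

lemma reduced2_01 (ψ : (Fin 4 → Fin 2) → ℂ) :
    reduced2 ψ 0 1 = psiMat ψ * (psiMat ψ)ᴴ := by
  ext a b
  show (∑ c : Fin 4 → Fin 2, if c 0 = 0 ∧ c 1 = 0 then
      ψ (Function.update (Function.update c 0 a.1) 1 a.2) *
        starRingEnd ℂ (ψ (Function.update (Function.update c 0 b.1) 1 b.2)) else 0) = _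
  rw [← Equiv.sum_comp quadEquiv]
  simp only [quadEquiv, Equiv.coe_fn_mk, Matrix.cons_val_zero, Matrix.cons_val_one,
    Matrix.head_cons, Fintype.sum_prod_type]
  simp only [Fin.sum_univ_two]
  simp only [upd01]
  simp [Matrix.mul_apply, Matrix.conjTranspose_apply, psiMat, Fintype.sum_prod_type]

lemma reduced2_23 (ψ : (Fin 4 → Fin 2) → ℂ) :
    reduced2 ψ 2 3 = ((psiMat ψ)ᴴ * psiMat ψ)ᵀ := by
  ext a b
  show (∑ c : Fin 4 → Fin 2, if c 2 = 0 ∧ c 3 = 0 then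
      ψ (Function.update (Function.update c 2 a.1) 3 a.2) *
        starRingEnd ℂ (ψ (Function.update (Function.update c 2 b.1) 3 b.2)) else 0) = _
  rw [← Equiv.sum_comp quadEquiv]
  simp only [quadEquiv, Equiv.coe_fn_mk, Matrix.cons_val_zero, Matrix.cons_val_one,
    Matrix.head_cons, Fintype.sum_prod_type]
  simp only [Fin.sum_univ_two]
  simp only [upd23]
  simp [Matrix.mul_apply, Matrix.conjTranspose_apply, Matrix.transpose_apply, psiMat,
    Fintype.sum_prod_type, mul_comm]

lemma kron_half_eq_blockDiagonal (A : Matrix (Fin 2) (Fin 2) ℂ) :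
    A ⊗ₖ ((1 / 2 : ℂ) • 1) =
      Matrix.blockDiagonal (fun _ : Fin 2 => (1 / 2 : ℂ) • A) := by
  ext ⟨a1, a2⟩ ⟨b1, b2⟩
  by_cases h : a2 = b2 <;>
    simp [Matrix.kroneckerMap_apply, Matrix.blockDiagonal_apply, Matrix.one_apply, h,
      mul_comm]

theorem spectrum_of_complementary_marginal (ψ : (Fin 4 → Fin 2) → ℂ) (p : ℝ)
    (hnorm : ∑ i : Fin 4 → Fin 2, ‖ψ i‖ ^ 2 = 1)
    (hp : p ≠ 1 / 2)
    (hchar : (reduced1 ψ 0).charpoly = (X - C (p : ℂ)) * (X - C ((1 - p : ℝ) : ℂ)))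
    (hprod : reduced2 ψ 0 1 = reduced1 ψ 0 ⊗ₖ ((1 / 2 : ℂ) • 1)) :
    (reduced2 ψ 2 3).charpoly =
      (X - C ((p / 2 : ℝ) : ℂ)) ^ 2 * (X - C (((1 - p) / 2 : ℝ) : ℂ)) ^ 2 := by
  have hexp : (X - C (p : ℂ)) * (X - C ((1 - p : ℝ) : ℂ)) =
      X ^ 2 - C ((p : ℂ) + ((1 - p : ℝ) : ℂ)) * X + C ((p : ℂ) * ((1 - p : ℝ) : ℂ)) := by
    simp only [map_add, _root_.map_mul]
    ring
  rw [myCharpoly_fin_two, hexp] at hchar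
  have hcoef : (reduced1 ψ 0).trace = 1 ∧ (reduced1 ψ 0).det = (p : ℂ) * (1 - (p : ℂ)) := by
    have h1 := congrArg (fun q => Polynomial.coeff q 1) hchar
    have h0 := congrArg (fun q => Polynomial.coeff q 0) hchar
    simp only [Polynomial.coeff_add, Polynomial.coeff_sub, Polynomial.coeff_C_mul,
      Polynomial.coeff_X_one, Polynomial.coeff_X_pow, Polynomial.coeff_C, mul_one] at h1 h0
    norm_num at h1 h0
    exact ⟨h1, h0⟩
  have hhalf : ((1 / 2 : ℂ) • reduced1 ψ 0).charpoly =
      (X - C ((p / 2 : ℝ) : ℂ)) * (X - C (((1 - p) / 2 : ℝ) : ℂ)) := by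
    rw [myCharpoly_fin_two, Matrix.trace_smul, Matrix.det_smul, hcoef.1, hcoef.2,
      smul_eq_mul]
    have e1 : C ((1 / 2 : ℂ) * 1) = C ((p / 2 : ℝ) : ℂ) + C (((1 - p) / 2 : ℝ) : ℂ) := by
      rw [← map_add]; congr 1; push_cast; ring
    have e2 : C ((1 / 2 : ℂ) ^ (Fintype.card (Fin 2)) * ((p : ℂ) * (1 - (p : ℂ)))) =
        C ((p / 2 : ℝ) : ℂ) * C (((1 - p) / 2 : ℝ) : ℂ) := by
      rw [← _root_.map_mul]; congr 1; simp only [Fintype.card_fin]; push_cast; ring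
    rw [e1, e2]
    ring
  rw [reduced2_23, myCharpoly_transpose, myCharpoly_mul_comm, ← reduced2_01, hprod,
    kron_half_eq_blockDiagonal, myCharpoly_blockDiagonal, Fin.prod_univ_two, hhalf]
  ring
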